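/- arXiv:1004.2170 — 2 statements merged into one kernel-verified Lean document; each statement's English description precedes it below -/
import Mathlib

section
/- Let x₁, x₂, x₃ ∈ ℝⁿ be pairwise distinct and set a = x₂ − x₁ and b = x₃ − x₂. Then for every coordinate index i, p_i(x₁,x₂,x₃) = (Σ_{j=1}^{n} (a_i b_j − b_i a_j)²) / (|a|² |b|² |a+b|²), and moreover the terms with j = i vanish, so the sum may be taken over j ≠ i. -/
/-- The symmetrization quantity `p_i(x₁,x₂,x₃)`. -/
noncomputable def rieszSym {n : ℕ} (i : Fin n) (x₁ x₂ x₃ : EuclideanSpace ℝ (Fin n)) : ℝ :=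
    ((x₂ - x₁) i / ‖x₂ - x₁‖ ^ 2) * ((x₃ - x₁) i / ‖x₃ - x₁‖ ^ 2) +
    ((x₁ - x₂) i / ‖x₁ - x₂‖ ^ 2) * ((x₃ - x₂) i / ‖x₃ - x₂‖ ^ 2) +
    ((x₁ - x₃) i / ‖x₁ - x₃‖ ^ 2) * ((x₂ - x₃) i / ‖x₂ - x₃‖ ^ 2)

/-!
With `a = x₂ - x₁`, `b = x₃ - x₂`, `s = aᵢ`, `t = bᵢ`, the three terms of `p_i` share the
denominator `|a|²|b|²|a+b|²`, and their numerator is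
`s(s+t)|b|² − st|a+b|² + (s+t)t|a|²`. Expanding `|a+b|²` by polarization turns this into
`s²|b|² − 2st⟪a,b⟫ + t²|a|² = |s b − t a|²`, whose coordinates are the `2 × 2` minors
`aᵢ bⱼ − bᵢ aⱼ`; the minor with `j = i` is zero.
-/

section InnerProductSpace

variable {E : Type*} [NormedAddCommGroup E] [InnerProductSpace ℝ E]

theorem norm_smul_sub_smul_sq (a b : E) (s t : ℝ) :
    ‖s • b - t • a‖ ^ 2 =
      s * (s + t) * ‖b‖ ^ 2 - s * t * ‖a + b‖ ^ 2 + (s + t) * t * ‖a‖ ^ 2 := by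
  rw [norm_sub_sq_real, norm_add_sq_real, norm_smul, norm_smul, real_inner_smul_left,
    real_inner_smul_right, real_inner_comm, Real.norm_eq_abs, Real.norm_eq_abs, mul_pow,
    mul_pow, sq_abs, sq_abs]
  ring

theorem three_term_sum_eq_norm_smul_sub_smul_sq_div {a b : E} (ha : a ≠ 0) (hb : b ≠ 0)
    (hab : a + b ≠ 0) (s t : ℝ) :
    s / ‖a‖ ^ 2 * ((s + t) / ‖a + b‖ ^ 2) + -s / ‖a‖ ^ 2 * (t / ‖b‖ ^ 2) +
        -(s + t) / ‖a + b‖ ^ 2 * (-t / ‖b‖ ^ 2) =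
      ‖s • b - t • a‖ ^ 2 / (‖a‖ ^ 2 * ‖b‖ ^ 2 * ‖a + b‖ ^ 2) := by
  have hA : ‖a‖ ^ 2 ≠ 0 := by positivity
  have hB : ‖b‖ ^ 2 ≠ 0 := by positivity
  have hC : ‖a + b‖ ^ 2 ≠ 0 := by positivity
  rw [norm_smul_sub_smul_sq]
  field_simp
  ring

end InnerProductSpace

theorem EuclideanSpace.norm_smul_sub_smul_sq {ι : Type*} [Fintype ι]
    (a b : EuclideanSpace ℝ ι) (s t : ℝ) :
    ‖s • b - t • a‖ ^ 2 = ∑ j, (s * b j - t * a j) ^ 2 := by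
  simp only [EuclideanSpace.real_norm_sq_eq, PiLp.sub_apply, PiLp.smul_apply, smul_eq_mul]

theorem rieszSym_eq_norm_sq_div {n : ℕ} {x₁ x₂ x₃ : EuclideanSpace ℝ (Fin n)}
    (h₁₂ : x₁ ≠ x₂) (h₁₃ : x₁ ≠ x₃) (h₂₃ : x₂ ≠ x₃) (i : Fin n) :
    rieszSym i x₁ x₂ x₃ =
      ‖(x₂ - x₁) i • (x₃ - x₂) - (x₃ - x₂) i • (x₂ - x₁)‖ ^ 2 /
        (‖x₂ - x₁‖ ^ 2 * ‖x₃ - x₂‖ ^ 2 * ‖(x₂ - x₁) + (x₃ - x₂)‖ ^ 2) := by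
  have h₃₁ : x₃ - x₁ = (x₂ - x₁) + (x₃ - x₂) := (sub_add_sub_cancel' x₂ x₁ x₃).symm
  rw [← three_term_sum_eq_norm_smul_sub_smul_sq_div (sub_ne_zero.mpr h₁₂.symm)
      (sub_ne_zero.mpr h₂₃.symm) (h₃₁ ▸ sub_ne_zero.mpr h₁₃.symm), rieszSym,
    ← neg_sub x₂ x₁, ← neg_sub x₃ x₁, ← neg_sub x₃ x₂, h₃₁]
  simp only [norm_neg, PiLp.neg_apply, PiLp.add_apply]

/-- With `a = x₂ - x₁` and `b = x₃ - x₂`, one has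
`p_i(x₁,x₂,x₃) = (Σ_j (a_i b_j − b_i a_j)²) / (|a|²|b|²|a+b|²)`, and the terms with
`j = i` vanish, so the sum may be taken over `j ≠ i`. -/
theorem rieszSym_eq_sum_sq_div (n : ℕ) (x₁ x₂ x₃ : EuclideanSpace ℝ (Fin n))
    (h₁₂ : x₁ ≠ x₂) (h₁₃ : x₁ ≠ x₃) (h₂₃ : x₂ ≠ x₃) (i : Fin n) :
    rieszSym i x₁ x₂ x₃ =
      (∑ j : Fin n,
          ((x₂ - x₁) i * (x₃ - x₂) j - (x₃ - x₂) i * (x₂ - x₁) j) ^ 2) /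
        (‖x₂ - x₁‖ ^ 2 * ‖x₃ - x₂‖ ^ 2 * ‖(x₂ - x₁) + (x₃ - x₂)‖ ^ 2) ∧
    rieszSym i x₁ x₂ x₃ =
      (∑ j ∈ Finset.univ.filter (fun j => j ≠ i),
          ((x₂ - x₁) i * (x₃ - x₂) j - (x₃ - x₂) i * (x₂ - x₁) j) ^ 2) /
        (‖x₂ - x₁‖ ^ 2 * ‖x₃ - x₂‖ ^ 2 * ‖(x₂ - x₁) + (x₃ - x₂)‖ ^ 2) := by
  have hfull := rieszSym_eq_norm_sq_div h₁₂ h₁₃ h₂₃ i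
  rw [EuclideanSpace.norm_smul_sub_smul_sq] at hfull
  refine ⟨hfull, hfull.trans ?_⟩
  rw [Finset.filter_ne', Finset.sum_erase _ (by ring)]
end

section
/- Let 0 < α ≤ 1. There exists a constant C > 0 depending only on n and α with the following property: for every compactly supported finite positive Borel measure μ on ℝⁿ satisfying μ(B(x,r)) ≤ r^α for all x ∈ ℝⁿ and r > 0, for every index i with 1 ≤ i ≤ n and every ε > 0, one has |∫ |R^i_{α,ε}(μ)(x)|² dμ(x) − (1/3)·p_{α,i,ε}(μ)| ≤ C·μ(ℝⁿ). -/
/-!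
Write `k(x,y)` for the truncated kernel of `R^i_{α,ε}` and `e(y,z)` for the indicator of
`|y - z| > ε`. Expanding the square, `∫ |R^i_{α,ε}(μ)|² dμ = ∭ k(x,y) k(x,z)`. Since the kernel
is odd, each of the three terms of `p_{α,i}` restricted to `S_ε` is `e(y,z) k(x,y) k(x,z)` with
the variables permuted, so by Fubini `p_{α,i,ε}(μ) = 3 ∭ e(y,z) k(x,y) k(x,z)`. The difference
is thus the near-diagonal integral of `k(x,y) k(x,z)` over `|y - z| ≤ ε`. There
`|x - z| > |x - y| / 2`, so the integrand is at most `2^α |x - y|^{-2α}`; integrating `z` over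
`B(y, ε)` costs `ε^α`, and splitting `|x - y| > ε` into dyadic annuli gives
`∫_{|x-y|>ε} |x - y|^{-2α} dμ(y) ≤ 2^α ε^{-α} / (1 - 2^{-α})` by the growth bound.
-/

open MeasureTheory

/-- The α-symmetrization quantity `p_{α,i}(x₁,x₂,x₃)`. -/
noncomputable def rieszSymA {n : ℕ} (α : ℝ) (i : Fin n)
    (x₁ x₂ x₃ : EuclideanSpace ℝ (Fin n)) : ℝ :=
    ((x₂ - x₁) i / ‖x₂ - x₁‖ ^ (1 + α)) * ((x₃ - x₁) i / ‖x₃ - x₁‖ ^ (1 + α)) +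
    ((x₁ - x₂) i / ‖x₁ - x₂‖ ^ (1 + α)) * ((x₃ - x₂) i / ‖x₃ - x₂‖ ^ (1 + α)) +
    ((x₁ - x₃) i / ‖x₁ - x₃‖ ^ (1 + α)) * ((x₂ - x₃) i / ‖x₂ - x₃‖ ^ (1 + α))

/-- The truncated `i`-th scalar `α`-Riesz transform of the measure `μ`:
`R^i_{α,ε}(μ)(x) = ∫_{|y−x|>ε} (x_i−y_i)/|x−y|^{1+α} dμ(y)`. -/
noncomputable def truncRieszA {n : ℕ} (α : ℝ) (i : Fin n) (ε : ℝ)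
    (μ : Measure (EuclideanSpace ℝ (Fin n))) (x : EuclideanSpace ℝ (Fin n)) : ℝ :=
    ∫ y in {y | ε < ‖x - y‖}, (x - y) i / ‖x - y‖ ^ (1 + α) ∂μ

/-- The truncated triple symmetrization integral
`p_{α,i,ε}(μ) = ∭_{S_ε} p_{α,i}(x,y,z) dμ(x)dμ(y)dμ(z)`. -/
noncomputable def truncSymA {n : ℕ} (α : ℝ) (i : Fin n) (ε : ℝ)
    (μ : Measure (EuclideanSpace ℝ (Fin n))) : ℝ :=
    ∫ x, ∫ y, ∫ z,
      (if ε < ‖x - y‖ ∧ ε < ‖x - z‖ ∧ ε < ‖y - z‖ then rieszSymA α i x y z else 0)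
      ∂μ ∂μ ∂μ

open Metric

section BoundedMeasurable

variable {Y Z : Type*} [MeasurableSpace Y] [MeasurableSpace Z]

def IsBoundedMeasurable (f : Y → ℝ) : Prop :=
  Measurable f ∧ ∃ C, ∀ y, |f y| ≤ C

namespace IsBoundedMeasurable

variable {f g : Y → ℝ}

theorem integrable (hf : IsBoundedMeasurable f) (μ : Measure Y) [IsFiniteMeasure μ] :
    Integrable f μ := by
  obtain ⟨hm, C, hC⟩ := hf
  exact .of_bound hm.aestronglyMeasurable C (ae_of_all _ hC)

theorem comp (hf : IsBoundedMeasurable f) {φ : Z → Y} (hφ : Measurable φ) :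
    IsBoundedMeasurable fun z => f (φ z) := by
  obtain ⟨hm, C, hC⟩ := hf
  exact ⟨hm.comp hφ, C, fun z => hC (φ z)⟩

theorem add (hf : IsBoundedMeasurable f) (hg : IsBoundedMeasurable g) :
    IsBoundedMeasurable fun y => f y + g y := by
  obtain ⟨hfm, C, hC⟩ := hf
  obtain ⟨hgm, D, hD⟩ := hg
  exact ⟨hfm.add hgm, C + D, fun y => (abs_add_le _ _).trans (add_le_add (hC y) (hD y))⟩

theorem sub (hf : IsBoundedMeasurable f) (hg : IsBoundedMeasurable g) :
    IsBoundedMeasurable fun y => f y - g y := by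
  obtain ⟨hfm, C, hC⟩ := hf
  obtain ⟨hgm, D, hD⟩ := hg
  exact ⟨hfm.sub hgm, C + D, fun y => (abs_sub _ _).trans (add_le_add (hC y) (hD y))⟩

theorem mul (hf : IsBoundedMeasurable f) (hg : IsBoundedMeasurable g) :
    IsBoundedMeasurable fun y => f y * g y := by
  obtain ⟨hfm, C, hC⟩ := hf
  obtain ⟨hgm, D, hD⟩ := hg
  refine ⟨hfm.mul hgm, C * D, fun y => ?_⟩
  rw [abs_mul]
  exact mul_le_mul (hC y) (hD y) (abs_nonneg _) ((abs_nonneg _).trans (hC y))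

theorem integral_prod_right {f : Y × Z → ℝ} (hf : IsBoundedMeasurable f) (ν : Measure Z)
    [IsFiniteMeasure ν] : IsBoundedMeasurable fun y => ∫ z, f (y, z) ∂ν := by
  obtain ⟨hm, C, hC⟩ := hf
  refine ⟨hm.stronglyMeasurable.integral_prod_right'.measurable, C * ν.real Set.univ,
    fun y => ?_⟩
  simpa only [Real.norm_eq_abs] using norm_integral_le_of_norm_le_const
    (ae_of_all _ fun z => (Real.norm_eq_abs _).trans_le (hC (y, z)))

end IsBoundedMeasurable

end BoundedMeasurable

section TripleIntegral

variable {X : Type*} [MeasurableSpace X] {μ : Measure X}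

theorem enorm_integral3_le_lintegral3_enorm (F : X → X → X → ℝ) :
    ‖∫ x, ∫ y, ∫ z, F x y z ∂μ ∂μ ∂μ‖ₑ ≤ ∫⁻ x, ∫⁻ y, ∫⁻ z, ‖F x y z‖ₑ ∂μ ∂μ ∂μ :=
  (enorm_integral_le_lintegral_enorm _).trans <| lintegral_mono fun _ =>
    (enorm_integral_le_lintegral_enorm _).trans <| lintegral_mono fun _ =>
      enorm_integral_le_lintegral_enorm _

theorem sq_integral_eq_integral_integral_mul (g : X → ℝ) :
    (∫ y, g y ∂μ) ^ 2 = ∫ y, ∫ z, g y * g z ∂μ ∂μ := by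
  simp only [integral_const_mul, integral_mul_const]
  ring

variable [IsFiniteMeasure μ] {F G : X → X → X → ℝ}

theorem integral3_eq_integral_prod
    (hF : IsBoundedMeasurable fun p : X × X × X => F p.1 p.2.1 p.2.2) :
    ∫ x, ∫ y, ∫ z, F x y z ∂μ ∂μ ∂μ = ∫ p, F p.1 p.2.1 p.2.2 ∂μ.prod (μ.prod μ) := by
  rw [integral_prod _ (hF.integrable _)]
  refine integral_congr_ae (ae_of_all _ fun x => ?_)
  exact (integral_prod _ ((hF.comp (measurable_prodMk_left (x := x))).integrable _)).symm

theorem integral3_add (hF : IsBoundedMeasurable fun p : X × X × X => F p.1 p.2.1 p.2.2)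
    (hG : IsBoundedMeasurable fun p : X × X × X => G p.1 p.2.1 p.2.2) :
    ∫ x, ∫ y, ∫ z, (F x y z + G x y z) ∂μ ∂μ ∂μ =
      (∫ x, ∫ y, ∫ z, F x y z ∂μ ∂μ ∂μ) + ∫ x, ∫ y, ∫ z, G x y z ∂μ ∂μ ∂μ := by
  rw [integral3_eq_integral_prod hF, integral3_eq_integral_prod hG,
    integral3_eq_integral_prod (F := fun x y z => F x y z + G x y z) (hF.add hG),
    integral_add (hF.integrable _) (hG.integrable _)]

theorem integral3_sub (hF : IsBoundedMeasurable fun p : X × X × X => F p.1 p.2.1 p.2.2)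
    (hG : IsBoundedMeasurable fun p : X × X × X => G p.1 p.2.1 p.2.2) :
    ∫ x, ∫ y, ∫ z, (F x y z - G x y z) ∂μ ∂μ ∂μ =
      (∫ x, ∫ y, ∫ z, F x y z ∂μ ∂μ ∂μ) - ∫ x, ∫ y, ∫ z, G x y z ∂μ ∂μ ∂μ := by
  rw [integral3_eq_integral_prod hF, integral3_eq_integral_prod hG,
    integral3_eq_integral_prod (F := fun x y z => F x y z - G x y z) (hF.sub hG),
    integral_sub (hF.integrable _) (hG.integrable _)]

theorem integral3_swap (hF : IsBoundedMeasurable fun p : X × X × X => F p.1 p.2.1 p.2.2) :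
    ∫ x, ∫ y, ∫ z, F y x z ∂μ ∂μ ∂μ = ∫ x, ∫ y, ∫ z, F x y z ∂μ ∂μ ∂μ :=
  integral_integral_swap <|
    ((hF.comp (φ := fun q : (X × X) × X => (q.1.2, q.1.1, q.2))
      (by fun_prop)).integral_prod_right μ).integrable _

theorem integral3_rotate (hF : IsBoundedMeasurable fun p : X × X × X => F p.1 p.2.1 p.2.2) :
    ∫ x, ∫ y, ∫ z, F z x y ∂μ ∂μ ∂μ = ∫ x, ∫ y, ∫ z, F x y z ∂μ ∂μ ∂μ := by
  have inner (x : X) : ∫ y, ∫ z, F z x y ∂μ ∂μ = ∫ z, ∫ y, F z x y ∂μ ∂μ :=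
    integral_integral_swap <|
      (hF.comp (φ := fun q : X × X => (q.2, x, q.1)) (by fun_prop)).integrable _
  rw [integral_congr_ae (ae_of_all _ inner)]
  exact integral_integral_swap <|
    ((hF.comp (φ := fun q : (X × X) × X => (q.1.2, q.1.1, q.2))
      (by fun_prop)).integral_prod_right μ).integrable _

theorem integral3_add_swap_add_rotate
    (hF : IsBoundedMeasurable fun p : X × X × X => F p.1 p.2.1 p.2.2) :
    ∫ x, ∫ y, ∫ z, (F x y z + F y x z + F z x y) ∂μ ∂μ ∂μ =
      3 * ∫ x, ∫ y, ∫ z, F x y z ∂μ ∂μ ∂μ := by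
  have hswap : IsBoundedMeasurable fun p : X × X × X => F p.2.1 p.1 p.2.2 :=
    hF.comp (φ := fun p : X × X × X => (p.2.1, p.1, p.2.2)) (by fun_prop)
  have hrot : IsBoundedMeasurable fun p : X × X × X => F p.2.2 p.1 p.2.1 :=
    hF.comp (φ := fun p : X × X × X => (p.2.2, p.1, p.2.1)) (by fun_prop)
  rw [integral3_add (F := fun x y z => F x y z + F y x z) (hF.add hswap) hrot,
    integral3_add hF hswap, integral3_swap hF, integral3_rotate hF]
  ring

theorem integral_sq_sub_third_integral3_eq {k e : X → X → ℝ}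
    (hk : IsBoundedMeasurable fun p : X × X => k p.1 p.2)
    (he : IsBoundedMeasurable fun p : X × X => e p.1 p.2) :
    ∫ x, (∫ y, k x y ∂μ) ^ 2 ∂μ - 1 / 3 * ∫ x, ∫ y, ∫ z,
        (e y z * (k x y * k x z) + e x z * (k y x * k y z) + e x y * (k z x * k z y))
        ∂μ ∂μ ∂μ =
      ∫ x, ∫ y, ∫ z, (1 - e y z) * (k x y * k x z) ∂μ ∂μ ∂μ := by
  have hkk : IsBoundedMeasurable fun p : X × X × X => k p.1 p.2.1 * k p.1 p.2.2 :=
    (hk.comp (φ := fun p : X × X × X => (p.1, p.2.1)) (by fun_prop)).mul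
      (hk.comp (φ := fun p : X × X × X => (p.1, p.2.2)) (by fun_prop))
  have hekk : IsBoundedMeasurable fun p : X × X × X =>
      e p.2.1 p.2.2 * (k p.1 p.2.1 * k p.1 p.2.2) :=
    (he.comp (φ := fun p : X × X × X => (p.2.1, p.2.2)) (by fun_prop)).mul hkk
  simp only [sq_integral_eq_integral_integral_mul]
  rw [integral3_add_swap_add_rotate (F := fun x y z => e y z * (k x y * k x z)) hekk,
    one_div, inv_mul_cancel_left₀ three_ne_zero, ← integral3_sub hkk hekk]
  simp only [sub_mul, one_mul]

end TripleIntegral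

section Metric

variable {X : Type*} [PseudoMetricSpace X]

noncomputable def farIndicator (ε : ℝ) (y z : X) : ℝ :=
  if ε < dist y z then 1 else 0

theorem isBoundedMeasurable_farIndicator [MeasurableSpace X] [OpensMeasurableSpace X]
    [SecondCountableTopology X] (ε : ℝ) :
    IsBoundedMeasurable fun p : X × X => farIndicator ε p.1 p.2 := by
  refine ⟨Measurable.ite (measurableSet_lt measurable_const measurable_dist) measurable_const
    measurable_const, 1, fun p => ?_⟩
  dsimp only [farIndicator]
  split_ifs <;> simp

variable {k : X → X → ℝ} {α ε : ℝ}

theorem enorm_one_sub_farIndicator_mul_le (hα : 0 ≤ α)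
    (hk_near : ∀ x y, dist x y ≤ ε → k x y = 0) (hk : ∀ x y, |k x y| ≤ dist x y ^ (-α))
    (x y z : X) :
    ‖(1 - farIndicator ε y z) * (k x y * k x z)‖ₑ ≤ (closedBall y ε).indicator
      (fun _ => {y | ε < dist x y}.indicator
        (fun y => ENNReal.ofReal (2 ^ α * dist x y ^ (-(2 * α)))) y) z := by
  by_cases hz : z ∈ closedBall y ε
  swap
  · have : farIndicator ε y z = 1 := if_pos (by rw [dist_comm]; exact not_le.1 hz)
    simp [this]
  by_cases hxy : ε < dist x y
  swap
  · simp [hk_near x y (not_lt.1 hxy)]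
  by_cases hxz : ε < dist x z
  swap
  · simp [hk_near x z (not_lt.1 hxz)]
  have hfar : farIndicator ε y z = 0 := if_neg (by rw [dist_comm]; exact not_lt.2 hz)
  rw [Set.indicator_of_mem hz, Set.indicator_of_mem (show y ∈ {y | ε < dist x y} from hxy),
    hfar, sub_zero, one_mul, Real.enorm_eq_ofReal_abs, abs_mul]
  refine ENNReal.ofReal_le_ofReal ?_
  have hxy0 : 0 < dist x y := (dist_nonneg.trans (mem_closedBall.1 hz)).trans_lt hxy
  -- `d(x,y) ≤ d(x,z) + d(z,y) ≤ d(x,z) + ε < 2 d(x,z)`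
  have hhalf : dist x y / 2 ≤ dist x z := by
    have := dist_triangle x z y
    have := mem_closedBall.1 hz
    linarith
  calc |k x y| * |k x z| ≤ dist x y ^ (-α) * (dist x y / 2) ^ (-α) :=
        mul_le_mul (hk x y) ((hk x z).trans
          (Real.rpow_le_rpow_of_nonpos (div_pos hxy0 two_pos) hhalf (by linarith)))
          (abs_nonneg _) (by positivity)
    _ = 2 ^ α * dist x y ^ (-(2 * α)) := by
        rw [Real.div_rpow hxy0.le zero_le_two, Real.rpow_neg zero_le_two, div_inv_eq_mul,
          neg_mul_eq_mul_neg, two_mul, Real.rpow_add hxy0]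
        ring

variable [MeasurableSpace X] {μ : Measure X}

theorem setLIntegral_rpow_dist_neg_le {s t : ℝ} (x : X) (hst : s < t) (ht : 0 ≤ t)
    (hε : 0 < ε) (hμ : ∀ r, 0 < r → μ (closedBall x r) ≤ ENNReal.ofReal (r ^ s)) :
    ∫⁻ y in {y | ε < dist x y}, ENNReal.ofReal (dist x y ^ (-t)) ∂μ ≤
      ENNReal.ofReal (2 ^ s * ε ^ (s - t) / (1 - 2 ^ (s - t))) := by
  set A : ℕ → Set X := fun j => {y | 2 ^ j * ε ≤ dist x y ∧ dist x y < 2 ^ (j + 1) * ε}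
  have hcover : {y | ε < dist x y} ⊆ ⋃ j, A j := by
    intro y hy
    obtain ⟨j, hj⟩ := exists_nat_pow_near ((one_le_div hε).2 (le_of_lt hy)) one_lt_two
    rw [le_div_iff₀ hε, div_lt_iff₀ hε] at hj
    exact Set.mem_iUnion.2 ⟨j, hj⟩
  have hq : (2:ℝ) ^ (s - t) < 1 := Real.rpow_lt_one_of_one_lt_of_neg one_lt_two (by linarith)
  have hterm (j : ℕ) : (2 ^ j * ε) ^ (-t) * (2 ^ (j + 1) * ε) ^ s =
      2 ^ s * ε ^ (s - t) * ((2:ℝ) ^ (s - t)) ^ j := by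
    have h2 : (2:ℝ) ^ (s - t) = 2 ^ s * 2 ^ (-t) := by
      rw [sub_eq_add_neg, Real.rpow_add two_pos]
    have hε' : ε ^ (s - t) = ε ^ s * ε ^ (-t) := by rw [sub_eq_add_neg, Real.rpow_add hε]
    rw [Real.mul_rpow (by positivity) hε.le, Real.mul_rpow (by positivity) hε.le,
      ← Real.rpow_pow_comm zero_le_two, ← Real.rpow_pow_comm zero_le_two, h2, hε', mul_pow,
      pow_succ]
    ring
  have hannulus (j : ℕ) : ∫⁻ y in A j, ENNReal.ofReal (dist x y ^ (-t)) ∂μ ≤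
      ENNReal.ofReal (2 ^ s * ε ^ (s - t)) * ENNReal.ofReal (2 ^ (s - t)) ^ j := by
    have hA : A j ⊆ closedBall x (2 ^ (j + 1) * ε) := fun y hy =>
      mem_closedBall'.2 hy.2.le
    calc ∫⁻ y in A j, ENNReal.ofReal (dist x y ^ (-t)) ∂μ
        ≤ ∫⁻ _ in A j, ENNReal.ofReal ((2 ^ j * ε) ^ (-t)) ∂μ :=
          setLIntegral_mono measurable_const fun y hy => ENNReal.ofReal_le_ofReal
            (Real.rpow_le_rpow_of_nonpos (by positivity) hy.1 (by linarith))
      _ = ENNReal.ofReal ((2 ^ j * ε) ^ (-t)) * μ (A j) := setLIntegral_const _ _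
      _ ≤ ENNReal.ofReal ((2 ^ j * ε) ^ (-t)) * ENNReal.ofReal ((2 ^ (j + 1) * ε) ^ s) := by
          gcongr
          exact (measure_mono hA).trans (hμ _ (by positivity))
      _ = ENNReal.ofReal (2 ^ s * ε ^ (s - t)) * ENNReal.ofReal (2 ^ (s - t)) ^ j := by
          rw [← ENNReal.ofReal_mul (by positivity), hterm, ← ENNReal.ofReal_pow (by positivity),
            ← ENNReal.ofReal_mul (by positivity)]
  calc ∫⁻ y in {y | ε < dist x y}, ENNReal.ofReal (dist x y ^ (-t)) ∂μ
      ≤ ∫⁻ y in ⋃ j, A j, ENNReal.ofReal (dist x y ^ (-t)) ∂μ := lintegral_mono_set hcover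
    _ ≤ ∑' j, ∫⁻ y in A j, ENNReal.ofReal (dist x y ^ (-t)) ∂μ := lintegral_iUnion_le _ _
    _ ≤ ∑' j : ℕ, ENNReal.ofReal (2 ^ s * ε ^ (s - t)) * ENNReal.ofReal (2 ^ (s - t)) ^ j :=
      ENNReal.tsum_le_tsum hannulus
    _ = ENNReal.ofReal (2 ^ s * ε ^ (s - t)) * (1 - ENNReal.ofReal (2 ^ (s - t)))⁻¹ := by
      rw [ENNReal.tsum_mul_left, ENNReal.tsum_geometric]
    _ = ENNReal.ofReal (2 ^ s * ε ^ (s - t) / (1 - 2 ^ (s - t))) := by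
      rw [← ENNReal.ofReal_one, ← ENNReal.ofReal_sub _ (by positivity),
        ← ENNReal.ofReal_inv_of_pos (by linarith), ← ENNReal.ofReal_mul (by positivity),
        div_eq_mul_inv]

theorem lintegral3_enorm_one_sub_farIndicator_mul_le (hα : 0 < α) (hε : 0 < ε)
    (hμ : ∀ x r, 0 < r → μ (closedBall x r) ≤ ENNReal.ofReal (r ^ α))
    (hk_near : ∀ x y, dist x y ≤ ε → k x y = 0) (hk : ∀ x y, |k x y| ≤ dist x y ^ (-α)) :
    ∫⁻ x, ∫⁻ y, ∫⁻ z, ‖(1 - farIndicator ε y z) * (k x y * k x z)‖ₑ ∂μ ∂μ ∂μ ≤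
      ENNReal.ofReal (4 ^ α / (1 - 2 ^ (-α))) * μ Set.univ := by
  have hinner (x y : X) : ∫⁻ z, ‖(1 - farIndicator ε y z) * (k x y * k x z)‖ₑ ∂μ ≤
      {y | ε < dist x y}.indicator (fun y => ENNReal.ofReal (2 ^ α * dist x y ^ (-(2 * α)))) y *
        ENNReal.ofReal (ε ^ α) :=
    (lintegral_mono (enorm_one_sub_farIndicator_mul_le hα.le hk_near hk x y)).trans <|
      (lintegral_indicator_const_le _ _).trans (by gcongr; exact hμ y ε hε)
  have hmiddle (x : X) : ∫⁻ y, ∫⁻ z, ‖(1 - farIndicator ε y z) * (k x y * k x z)‖ₑ ∂μ ∂μ ≤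
      ENNReal.ofReal (4 ^ α / (1 - 2 ^ (-α))) := by
    have hdyadic := setLIntegral_rpow_dist_neg_le x (by linarith : α < 2 * α) (by linarith) hε
      (hμ x)
    rw [show α - 2 * α = -α by ring] at hdyadic
    calc ∫⁻ y, ∫⁻ z, ‖(1 - farIndicator ε y z) * (k x y * k x z)‖ₑ ∂μ ∂μ
        ≤ (∫⁻ y, {y | ε < dist x y}.indicator
            (fun y => ENNReal.ofReal (2 ^ α * dist x y ^ (-(2 * α)))) y ∂μ) *
            ENNReal.ofReal (ε ^ α) := by
          rw [← lintegral_mul_const' _ _ ENNReal.ofReal_ne_top]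
          exact lintegral_mono (hinner x)
      _ ≤ ENNReal.ofReal (2 ^ α) *
            (∫⁻ y in {y | ε < dist x y}, ENNReal.ofReal (dist x y ^ (-(2 * α))) ∂μ) *
            ENNReal.ofReal (ε ^ α) := by
          rw [← lintegral_const_mul' _ _ ENNReal.ofReal_ne_top]
          gcongr ?_ * _
          refine (lintegral_indicator_le _ _).trans_eq ?_
          simp only [ENNReal.ofReal_mul (Real.rpow_nonneg zero_le_two α)]
      _ ≤ ENNReal.ofReal (2 ^ α) * ENNReal.ofReal (2 ^ α * ε ^ (-α) / (1 - 2 ^ (-α))) *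
            ENNReal.ofReal (ε ^ α) := by
          gcongr
      _ = ENNReal.ofReal (4 ^ α / (1 - 2 ^ (-α))) := by
          have hq : 0 < 1 - (2:ℝ) ^ (-α) :=
            sub_pos.2 (Real.rpow_lt_one_of_one_lt_of_neg one_lt_two (by linarith))
          rw [← ENNReal.ofReal_mul (by positivity), ← ENNReal.ofReal_mul (by positivity)]
          congr 1
          rw [Real.rpow_neg hε.le, show (4:ℝ) = 2 * 2 by norm_num,
            Real.mul_rpow zero_le_two zero_le_two]
          field_simp
  calc ∫⁻ x, ∫⁻ y, ∫⁻ z, ‖(1 - farIndicator ε y z) * (k x y * k x z)‖ₑ ∂μ ∂μ ∂μ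
      ≤ ∫⁻ _, ENNReal.ofReal (4 ^ α / (1 - 2 ^ (-α))) ∂μ := lintegral_mono hmiddle
    _ = ENNReal.ofReal (4 ^ α / (1 - 2 ^ (-α))) * μ Set.univ := lintegral_const _

end Metric

section Euclidean

variable {n : ℕ}

noncomputable def truncRieszKernel (α : ℝ) (i : Fin n) (ε : ℝ)
    (x y : EuclideanSpace ℝ (Fin n)) : ℝ :=
  if ε < ‖x - y‖ then (x - y) i / ‖x - y‖ ^ (1 + α) else 0

variable {α ε : ℝ} (i : Fin n)

theorem truncRieszA_eq_integral_truncRieszKernel (μ : Measure (EuclideanSpace ℝ (Fin n)))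
    (x : EuclideanSpace ℝ (Fin n)) :
    truncRieszA α i ε μ x = ∫ y, truncRieszKernel α i ε x y ∂μ := by
  rw [truncRieszA, ← integral_indicator (measurableSet_lt measurable_const (by fun_prop))]
  rfl

theorem truncRieszKernel_of_dist_le {x y : EuclideanSpace ℝ (Fin n)} (h : dist x y ≤ ε) :
    truncRieszKernel α i ε x y = 0 :=
  if_neg (by rw [← dist_eq_norm]; exact not_lt.2 h)

theorem abs_truncRieszKernel_le (hε : 0 ≤ ε) (x y : EuclideanSpace ℝ (Fin n)) :
    |truncRieszKernel α i ε x y| ≤ dist x y ^ (-α) := by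
  rw [dist_eq_norm, truncRieszKernel]
  split_ifs with h
  · have hpos : 0 < ‖x - y‖ := hε.trans_lt h
    rw [abs_div, abs_of_pos (Real.rpow_pos_of_pos hpos _),
      show -α = 1 - (1 + α) by ring, Real.rpow_sub hpos, Real.rpow_one]
    gcongr
    simpa using PiLp.norm_apply_le (x - y) i
  · simp only [abs_zero]
    positivity

theorem isBoundedMeasurable_truncRieszKernel (hα : 0 ≤ α) (hε : 0 < ε) :
    IsBoundedMeasurable fun p : EuclideanSpace ℝ (Fin n) × EuclideanSpace ℝ (Fin n) =>
      truncRieszKernel α i ε p.1 p.2 := by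
  refine ⟨Measurable.ite (measurableSet_lt measurable_const (by fun_prop)) (by fun_prop)
    measurable_const, ε ^ (-α), fun p => ?_⟩
  dsimp only
  by_cases h : dist p.1 p.2 ≤ ε
  · rw [truncRieszKernel_of_dist_le i h, abs_zero]
    positivity
  · exact (abs_truncRieszKernel_le i hε.le _ _).trans
      (Real.rpow_le_rpow_of_nonpos hε (not_le.1 h).le (by linarith))

theorem truncSymA_integrand_eq (x y z : EuclideanSpace ℝ (Fin n)) :
    (if ε < ‖x - y‖ ∧ ε < ‖x - z‖ ∧ ε < ‖y - z‖ then rieszSymA α i x y z else 0) =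
      farIndicator ε y z * (truncRieszKernel α i ε x y * truncRieszKernel α i ε x z) +
      farIndicator ε x z * (truncRieszKernel α i ε y x * truncRieszKernel α i ε y z) +
      farIndicator ε x y * (truncRieszKernel α i ε z x * truncRieszKernel α i ε z y) := by
  have hcoord (a b : EuclideanSpace ℝ (Fin n)) : (b - a) i = -(a - b) i := by
    rw [← neg_sub a b]; rfl
  simp only [farIndicator, truncRieszKernel, rieszSymA, dist_eq_norm, norm_sub_rev y x,
    norm_sub_rev z x, norm_sub_rev z y, hcoord x y, hcoord x z, hcoord y z]
  by_cases hxy : ε < ‖x - y‖ <;> by_cases hxz : ε < ‖x - z‖ <;> by_cases hyz : ε < ‖y - z‖ <;>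
    simp only [hxy, hxz, hyz, and_self, and_true, and_false, if_true, if_false] <;> ring

end Euclidean

theorem abs_l2_sub_third_truncSymA_le_general (n : ℕ) (α : ℝ) (hα₀ : 0 < α) :
    ∃ C > 0, ∀ μ : Measure (EuclideanSpace ℝ (Fin n)), IsFiniteMeasure μ →
      (∃ K : Set (EuclideanSpace ℝ (Fin n)), IsCompact K ∧ μ Kᶜ = 0) →
      (∀ (x : EuclideanSpace ℝ (Fin n)) (r : ℝ), 0 < r →
        μ (Metric.closedBall x r) ≤ ENNReal.ofReal (r ^ α)) →
      ∀ i : Fin n, ∀ ε > 0,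
        |(∫ x, truncRieszA α i ε μ x ^ 2 ∂μ) - (1 / 3) * truncSymA α i ε μ| ≤
          C * (μ Set.univ).toReal := by
  have hq : (2:ℝ) ^ (-α) < 1 := Real.rpow_lt_one_of_one_lt_of_neg one_lt_two (by linarith)
  refine ⟨4 ^ α / (1 - 2 ^ (-α)), div_pos (by positivity) (sub_pos.2 hq), ?_⟩
  intro μ _ _ hμ i ε hε
  simp only [truncRieszA_eq_integral_truncRieszKernel, truncSymA, truncSymA_integrand_eq]
  rw [integral_sq_sub_third_integral3_eq (isBoundedMeasurable_truncRieszKernel i hα₀.le hε)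
    (isBoundedMeasurable_farIndicator ε), ← Real.norm_eq_abs, ← toReal_enorm]
  have hbound := (enorm_integral3_le_lintegral3_enorm _).trans <|
    lintegral3_enorm_one_sub_farIndicator_mul_le hα₀ hε hμ
      (fun _ _ => truncRieszKernel_of_dist_le i) (abs_truncRieszKernel_le i hε.le)
  refine (ENNReal.toReal_mono (by finiteness) hbound).trans_eq ?_
  rw [ENNReal.toReal_mul, ENNReal.toReal_ofReal (div_pos (by positivity) (sub_pos.2 hq)).le]

/-- For `0 < α ≤ 1` there is `C = C(n,α) > 0` such that for every compactly supported
finite positive Borel measure `μ` on `ℝⁿ` with `μ(B(x,r)) ≤ r^α`, every coordinate `i`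
and every `ε > 0`, `|∫ |R^i_{α,ε}(μ)|² dμ − (1/3) p_{α,i,ε}(μ)| ≤ C μ(ℝⁿ)`. -/
theorem abs_l2_sub_third_truncSymA_le (n : ℕ) (α : ℝ) (hα₀ : 0 < α) (hα₁ : α ≤ 1) :
    ∃ C > 0, ∀ μ : Measure (EuclideanSpace ℝ (Fin n)), IsFiniteMeasure μ →
      (∃ K : Set (EuclideanSpace ℝ (Fin n)), IsCompact K ∧ μ Kᶜ = 0) →
      (∀ (x : EuclideanSpace ℝ (Fin n)) (r : ℝ), 0 < r →
        μ (Metric.closedBall x r) ≤ ENNReal.ofReal (r ^ α)) →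
      ∀ i : Fin n, ∀ ε > 0,
        |(∫ x, truncRieszA α i ε μ x ^ 2 ∂μ) - (1 / 3) * truncSymA α i ε μ| ≤
          C * (μ Set.univ).toReal :=
  abs_l2_sub_third_truncSymA_le_general n α hα₀
end
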